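/- arXiv:1503.00117 — 5 statements merged into one kernel-verified Lean document; each statement's English description precedes it below -/
import Mathlib

section
/- For every real number u, 2·sin(4πu) - 5·sin(3πu) + 7·sin(πu) = 4·sin(πu)·(4·cos(πu) + 3)·(cos(πu) - 1)². -/
open Real

theorem two_sin_four_mul_sub_five_sin_three_mul_add_seven_sin (x : ℝ) :
    2 * sin (4 * x) - 5 * sin (3 * x) + 7 * sin x =
      4 * sin x * (4 * cos x + 3) * (cos x - 1) ^ 2 := by
  rw [show 4 * x = 2 * (2 * x) by ring, sin_two_mul, sin_two_mul, cos_two_mul, sin_three_mul]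
  linear_combination 20 * sin x * sin_sq_add_cos_sq x

theorem stmt_6 (u : ℝ) :
    2 * sin (4 * π * u) - 5 * sin (3 * π * u) + 7 * sin (π * u) =
      4 * sin (π * u) * (4 * cos (π * u) + 3) * (cos (π * u) - 1) ^ 2 := by
  rw [mul_assoc 4, mul_assoc 3]
  exact two_sin_four_mul_sub_five_sin_three_mul_add_seven_sin (π * u)
end

section
/- For every real number u, sin(5πu) - 7·sin(3πu) + 8·sin(2πu) = 8·sin(πu)·(cos(πu) - 1)²·(2·cos²(πu) + 4·cos(πu) + 1). -/
open Real

theorem sin_five_mul_sub_seven_sin_three_mul_add_eight_sin_two_mul (x : ℝ) :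
    sin (5 * x) - 7 * sin (3 * x) + 8 * sin (2 * x) =
      8 * sin x * (cos x - 1) ^ 2 * (2 * cos x ^ 2 + 4 * cos x + 1) := by
  have h5 : 5 * x = 2 * x + 3 * x := by ring
  rw [h5, sin_add, sin_two_mul, cos_two_mul, sin_three_mul, cos_three_mul]
  linear_combination (32 - 8 * cos x ^ 2) * sin x * sin_sq_add_cos_sq x

theorem stmt_7 (u : ℝ) :
    sin (5 * π * u) - 7 * sin (3 * π * u) + 8 * sin (2 * π * u) =
      8 * sin (π * u) * (cos (π * u) - 1) ^ 2 *
        (2 * cos (π * u) ^ 2 + 4 * cos (π * u) + 1) := by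
  simpa only [mul_assoc] using sin_five_mul_sub_seven_sin_three_mul_add_eight_sin_two_mul (π * u)
end

section
/- Let N(λ) = #{(m,n) ∈ Z² : (16π²/9)(m² + mn + n²) < λ} be the eigenvalue counting function of the equilateral torus. Then for all λ > 0, N(λ) ≥ (3√3/2)·(λ/(4π)) - (9/(2π))·√λ + 1. -/
/-!
Put `r = 3√λ / (4π)`, so that `(16π²/9)(m² + mn + n²) < λ` says that the point
`m + nω` (`ω = e^{iπ/3}`) of the hexagonal lattice lies in the open disc of radius `r`.
Tile the plane by the `1 × √3/2` bricks centred at the lattice points, consecutive rows offset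
by half a brick; every point of a brick is within `√7/4` of its centre. The bricks meeting the
disc of radius `r - √7/4` therefore have their centres in the disc of radius `r`, and comparing
areas gives `(√3/2) N ≥ π (r - √7/4)²`, which dominates the claimed bound once `r ≥ √7/4`.
For smaller `r` the bound is at most `1`, and the origin alone is counted.
-/

open Real MeasureTheory Complex Set

theorem Complex.volume_reProdIm (s t : Set ℝ) : volume (s ×ℂ t) = volume s * volume t := by
  have := volume_preserving_equiv_real_prod.measure_preimage_equiv (s ×ˢ t)
  rwa [Measure.volume_eq_prod, Measure.prod_prod] at this

def centeredBox (c : ℂ) (a b : ℝ) : Set ℂ :=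
  Icc (c.re - a) (c.re + a) ×ℂ Icc (c.im - b) (c.im + b)

theorem volume_centeredBox (c : ℂ) {a : ℝ} (ha : 0 ≤ a) (b : ℝ) :
    volume (centeredBox c a b) = ENNReal.ofReal (4 * a * b) := by
  rw [centeredBox, Complex.volume_reProdIm, Real.volume_Icc, Real.volume_Icc,
    ← ENNReal.ofReal_mul (by linarith)]
  ring_nf

theorem norm_sub_le_of_mem_centeredBox {c z : ℂ} {a b : ℝ} (hz : z ∈ centeredBox c a b) :
    ‖z - c‖ ≤ √(a ^ 2 + b ^ 2) := by
  obtain ⟨⟨hre₁, hre₂⟩, him₁, him₂⟩ := hz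
  rw [norm_eq_sqrt_sq_add_sq, sub_re, sub_im]
  exact Real.sqrt_le_sqrt <| add_le_add (sq_le_sq' (by linarith) (by linarith))
    (sq_le_sq' (by linarith) (by linarith))

theorem pi_mul_sq_sub_le_card_mul {ι : Type*} (p : ι → ℂ) (cell : ι → Set ℂ) {ρ v r : ℝ}
    (hv : 0 ≤ v) (hcover : ∀ z, ∃ i, z ∈ cell i) (hcell : ∀ i, ∀ z ∈ cell i, ‖z - p i‖ ≤ ρ)
    (hvol : ∀ i, volume (cell i) = ENNReal.ofReal v) (hρr : ρ ≤ r)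
    (S : Finset ι) (hS : ∀ i, ‖p i‖ < r → i ∈ S) :
    π * (r - ρ) ^ 2 ≤ S.card * v := by
  have hball : Metric.ball 0 (r - ρ) ⊆ ⋃ i ∈ S, cell i := by
    intro z hz
    obtain ⟨i, hi⟩ := hcover z
    refine mem_biUnion (hS i ?_) hi
    calc ‖p i‖ ≤ ‖z‖ + ‖z - p i‖ := norm_le_norm_add_norm_sub _ _
      _ < (r - ρ) + ρ := add_lt_add_of_lt_of_le (mem_ball_zero_iff.mp hz) (hcell i z hi)
      _ = r := by ring
  have hle : volume (Metric.ball (0 : ℂ) (r - ρ)) ≤ S.card * ENNReal.ofReal v :=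
    calc volume (Metric.ball (0 : ℂ) (r - ρ)) ≤ volume (⋃ i ∈ S, cell i) := measure_mono hball
      _ ≤ ∑ i ∈ S, volume (cell i) := measure_biUnion_finset_le S cell
      _ = S.card * ENNReal.ofReal v := by simp [hvol]
  rwa [Complex.volume_ball, ← ENNReal.ofReal_pow (by linarith), ← ENNReal.ofReal_coe_nnreal,
    ← ENNReal.ofReal_mul (by positivity), ← ENNReal.ofReal_natCast,
    ← ENNReal.ofReal_mul (by positivity), ENNReal.ofReal_le_ofReal_iff (by positivity),
    NNReal.coe_real_pi, mul_comm] at hle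

namespace HexLattice

noncomputable def point (q : ℤ × ℤ) : ℂ := ⟨q.1 + q.2 / 2, q.2 * (√3 / 2)⟩

@[simp]
theorem point_zero : point 0 = 0 := by
  apply Complex.ext <;> simp [point]

theorem normSq_point (q : ℤ × ℤ) :
    normSq (point q) = (q.1 : ℝ) ^ 2 + q.1 * q.2 + q.2 ^ 2 := by
  have h3 : √3 ^ 2 = 3 := sq_sqrt (by norm_num)
  simp only [point, normSq_apply]
  linear_combination (q.2 : ℝ) ^ 2 / 4 * h3

theorem abs_le_two_mul_norm_point (q : ℤ × ℤ) :
    |(q.1 : ℝ)| ≤ 2 * ‖point q‖ ∧ |(q.2 : ℝ)| ≤ 2 * ‖point q‖ := by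
  have h := Complex.sq_norm (point q)
  rw [normSq_point] at h
  constructor <;> refine abs_le_of_sq_le_sq ?_ (by positivity) <;>
    nlinarith [sq_nonneg ((q.1 : ℝ) + 2 * q.2), sq_nonneg (2 * (q.1 : ℝ) + q.2)]

theorem finite_setOf_norm_point_lt (r : ℝ) : {q | ‖point q‖ < r}.Finite := by
  set K := ⌈2 * r⌉
  refine (finite_Icc (-K, -K) (K, K)).subset fun q hq => ?_
  have hK : 2 * ‖point q‖ ≤ K := by linarith [Int.le_ceil (2 * r), show ‖point q‖ < r from hq]
  obtain ⟨h1, h2⟩ := abs_le_two_mul_norm_point q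
  have h1 : |q.1| ≤ K := by exact_mod_cast h1.trans hK
  have h2 : |q.2| ≤ K := by exact_mod_cast h2.trans hK
  rw [abs_le] at h1 h2
  exact ⟨⟨h1.1, h2.1⟩, h1.2, h2.2⟩

noncomputable def cell (q : ℤ × ℤ) : Set ℂ := centeredBox (point q) (1 / 2) (√3 / 4)

theorem exists_mem_cell (z : ℂ) : ∃ q, z ∈ cell q := by
  have h3 : 0 < √3 / 2 := by positivity
  obtain ⟨n, hn⟩ : ∃ n : ℤ, |z.im / (√3 / 2) - n| ≤ 1 / 2 := ⟨_, abs_sub_round _⟩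
  obtain ⟨m, hm⟩ : ∃ m : ℤ, |z.re - n / 2 - m| ≤ 1 / 2 := ⟨_, abs_sub_round _⟩
  have hn : |z.im - n * (√3 / 2)| ≤ √3 / 4 := by
    have e : z.im - n * (√3 / 2) = (z.im / (√3 / 2) - n) * (√3 / 2) := by field_simp
    rw [e, abs_mul, abs_of_pos h3]
    linarith [mul_le_mul_of_nonneg_right hn h3.le]
  rw [abs_le] at hn hm
  refine ⟨(m, n), ?_, ?_⟩ <;> simp only [point] <;> constructor <;> linarith

theorem volume_cell (q : ℤ × ℤ) : volume (cell q) = ENNReal.ofReal (√3 / 2) := by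
  rw [cell, volume_centeredBox _ (by norm_num)]
  ring_nf

theorem norm_sub_point_le_of_mem_cell {q : ℤ × ℤ} {z : ℂ} (hz : z ∈ cell q) :
    ‖z - point q‖ ≤ √7 / 4 := by
  have h3 : √3 ^ 2 = 3 := sq_sqrt (by norm_num)
  have h7 : √((1 / 2) ^ 2 + (√3 / 4) ^ 2) = √7 / 4 := by
    rw [show (1 / 2 : ℝ) ^ 2 + (√3 / 4) ^ 2 = (√7 / 4) ^ 2 by
      rw [div_pow, div_pow, div_pow, h3, sq_sqrt (by norm_num)]; norm_num, sqrt_sq (by positivity)]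
  exact h7 ▸ norm_sub_le_of_mem_centeredBox hz

/-- The right-hand side of the theorem, written in terms of `r = 3√λ / (4π)`. -/
noncomputable def countingBound (r : ℝ) : ℝ := 2 * √3 * π * r ^ 2 / 3 - 6 * r + 1

theorem countingBound_le_one {r : ℝ} (hr : 0 ≤ r) (hr1 : r ≤ 1) :
    countingBound r ≤ 1 := by
  rw [countingBound]
  have hc : √3 * π ≤ 6 := by
    nlinarith [sqrt_nonneg 3, sq_sqrt (show (0 : ℝ) ≤ 3 by norm_num), pi_lt_d2, pi_pos]
  nlinarith [mul_le_mul_of_nonneg_right hc (sq_nonneg r)]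

theorem sqrt_three_div_two_mul_countingBound_le {r : ℝ} (hr : 0 ≤ r) :
    √3 / 2 * countingBound r ≤ π * (r - √7 / 4) ^ 2 := by
  rw [countingBound]
  have h3 : √3 ^ 2 = 3 := sq_sqrt (by norm_num)
  have h7 : √7 ^ 2 = 7 := sq_sqrt (by norm_num)
  have h3lo : 1.73 ≤ √3 := by nlinarith [sqrt_nonneg 3]
  have h3hi : √3 ≤ 1.74 := by nlinarith [sqrt_nonneg 3]
  have h7hi : √7 ≤ 2.65 := by nlinarith [sqrt_nonneg 7]
  have hcoef : π * √7 / 2 ≤ 3 * √3 := by nlinarith [sqrt_nonneg 7, pi_lt_d2]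
  calc √3 / 2 * (2 * √3 * π * r ^ 2 / 3 - 6 * r + 1) = π * r ^ 2 - 3 * √3 * r + √3 / 2 := by
        linear_combination π * r ^ 2 / 3 * h3
    _ ≤ π * r ^ 2 - π * √7 / 2 * r + 7 * π / 16 := by
        nlinarith [mul_le_mul_of_nonneg_right hcoef hr, pi_gt_three]
    _ = π * (r - √7 / 4) ^ 2 := by linear_combination -π / 16 * h7

theorem countingBound_le_ncard {r : ℝ} (hr : 0 < r) :
    countingBound r ≤ {q | ‖point q‖ < r}.ncard := by
  have hfin := finite_setOf_norm_point_lt r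
  rcases lt_or_ge r (√7 / 4) with hsmall | hlarge
  · have hr1 : r ≤ 1 := by nlinarith [sqrt_nonneg 7, sq_sqrt (show (0 : ℝ) ≤ 7 by norm_num)]
    have hone : (1 : ℝ) ≤ {q | ‖point q‖ < r}.ncard := by
      exact_mod_cast (ncard_pos hfin).2 ⟨0, show ‖point 0‖ < r by simpa using hr⟩
    exact (countingBound_le_one hr.le hr1).trans hone
  · have harea := pi_mul_sq_sub_le_card_mul point cell (by positivity) exists_mem_cell
      (fun _ _ => norm_sub_point_le_of_mem_cell) volume_cell hlarge hfin.toFinset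
      (fun _ hq => hfin.mem_toFinset.2 hq)
    rw [← ncard_eq_toFinset_card _ hfin] at harea
    have h3 : 0 < √3 / 2 := by positivity
    refine le_of_mul_le_mul_left ?_ h3
    linarith [sqrt_three_div_two_mul_countingBound_le hr.le]

end HexLattice

theorem stmt_16 (lam : ℝ) (hlam : 0 < lam) :
    ((({p : ℤ × ℤ | (16 * π ^ 2 / 9) * ((p.1 : ℝ) ^ 2 + p.1 * p.2 + p.2 ^ 2) < lam}).ncard : ℝ)) ≥
      (3 * Real.sqrt 3 / 2) * (lam / (4 * π)) - (9 / (2 * π)) * Real.sqrt lam + 1 := by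
  set r := 3 * √lam / (4 * π)
  have hr : 0 < r := by positivity
  have hsqrt : √lam = 4 * π * r / 3 := by simp only [r]; field_simp
  have hlam_eq : lam = 16 * π ^ 2 / 9 * r ^ 2 := by
    rw [← sq_sqrt hlam.le, hsqrt]
    ring
  have hset : {p : ℤ × ℤ | (16 * π ^ 2 / 9) * ((p.1 : ℝ) ^ 2 + p.1 * p.2 + p.2 ^ 2) < lam} =
      {q | ‖HexLattice.point q‖ < r} := by
    ext q
    rw [mem_ofPred, mem_ofPred, ← HexLattice.normSq_point, ← Complex.sq_norm, hlam_eq,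
      mul_lt_mul_iff_right₀ (by positivity), sq_lt_sq₀ (norm_nonneg _) hr.le]
  rw [hset, ge_iff_le, hsqrt, hlam_eq]
  convert HexLattice.countingBound_le_ncard hr using 1
  rw [HexLattice.countingBound]
  field_simp
  ring
end

section
/- Suppose n ≥ 4, λ is a Dirichlet eigenvalue of a planar domain of area A = √3/4 (the equilateral triangle of side 1), λ satisfies both λ ≥ (4π·j₀₁²/√3)·n (Faber–Krahn necessary condition for Courant-sharpness) and (√3/(16π))·λ - (3/(2π))·√λ + 2 - n ≤ 0 (counting-function necessary condition), where j₀₁ is the first positive zero of the Bessel function J₀ (j₀₁ > 2.40). Then n ≤ 40. -/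
/-!
Faber–Krahn bounds the index from above, `π j₀₁² n ≤ A λ`, while the counting condition bounds it
from below, `n ≥ A λ / (4π) - b √λ + c`. Since `j₀₁² > 4`, eliminating `n` leaves a quadratic
inequality in `√λ` with positive leading coefficient, so `λ` is bounded; for the equilateral
triangle this gives `λ < 1700`, and Faber–Krahn then forces `n < 41`.
-/

open Real

theorem weyl_sub_faberKrahn_nonpos {A b c j lam n : ℝ} (hj : j ≠ 0)
    (hFK : π * j ^ 2 * n ≤ A * lam) (hW : A / (4 * π) * lam - b * √lam + c - n ≤ 0) :
    A / (4 * π) * (1 - 4 / j ^ 2) * lam - b * √lam + c ≤ 0 := by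
  have hn : n ≤ A / (4 * π) * (4 / j ^ 2) * lam := by
    rw [show A / (4 * π) * (4 / j ^ 2) * lam = A * lam / (π * j ^ 2) by field_simp]
    exact (le_div_iff₀ (by positivity)).2 (by linarith)
  linarith

theorem lt_1700_of_triangle_quadratic_nonpos {j lam : ℝ} (hj : 2.4 < j)
    (h : √3 / 4 / (4 * π) * (1 - 4 / j ^ 2) * lam - 3 / (2 * π) * √lam + 2 ≤ 0) :
    lam < 1700 := by
  by_contra! hlam
  set s := √lam
  have hs2 : s ^ 2 = lam := sq_sqrt (by linarith)
  have hs0 : 0 ≤ s := sqrt_nonneg lam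
  have hcoef : 11 / 36 < 1 - 4 / j ^ 2 := by
    have : 4 / j ^ 2 < 4 / 2.4 ^ 2 := by gcongr
    norm_num at this ⊢
    linarith
  have h3 : 1.732 < √3 := by
    rw [lt_sqrt (by norm_num)]
    norm_num
  have hquad : √3 / 8 * (1 - 4 / j ^ 2) * s ^ 2 - 3 * s + 4 * π ≤ 0 :=
    calc √3 / 8 * (1 - 4 / j ^ 2) * s ^ 2 - 3 * s + 4 * π
        = 2 * π * (√3 / 4 / (4 * π) * (1 - 4 / j ^ 2) * lam - 3 / (2 * π) * s + 2) := by
          rw [← hs2]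
          field_simp
          ring
      _ ≤ 0 := mul_nonpos_of_nonneg_of_nonpos (by positivity) h
  have hlead : 1.732 * (11 / 36) * s ^ 2 ≤ √3 * (1 - 4 / j ^ 2) * s ^ 2 := by
    gcongr
  nlinarith [pi_gt_three]

theorem stmt_18_general (n : ℕ) (lam j01 : ℝ) (hj : 2.40 < j01)
    (hFK : lam ≥ (4 * π * j01 ^ 2 / Real.sqrt 3) * n)
    (hcount : (Real.sqrt 3 / (16 * π)) * lam - (3 / (2 * π)) * Real.sqrt lam + 2 - n ≤ 0) :
    n ≤ 40 := by
  have hFK' : π * j01 ^ 2 * n ≤ √3 / 4 * lam := by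
    rw [ge_iff_le, div_mul_eq_mul_div, div_le_iff₀ (by positivity)] at hFK
    linarith
  have hW : √3 / 4 / (4 * π) * lam - 3 / (2 * π) * √lam + 2 - n ≤ 0 := by
    rwa [div_div, show (4 : ℝ) * (4 * π) = 16 * π by ring]
  have hlam : lam < 1700 := lt_1700_of_triangle_quadratic_nonpos (by linarith)
    (weyl_sub_faberKrahn_nonpos (by positivity) hFK' hW)
  have h3 : √3 < 1.7321 := by
    rw [sqrt_lt' (by norm_num)]
    norm_num
  have hj2 : 5.76 < j01 ^ 2 := by nlinarith
  by_contra! hn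
  have hlow : 3.14 * 5.76 * 41 ≤ π * j01 ^ 2 * n := by
    gcongr
    · exact pi_gt_d2.le
    · exact_mod_cast hn
  have hup : √3 / 4 * lam ≤ 1.7321 / 4 * 1700 := by
    have : 0 ≤ lam := (mul_nonneg_iff_of_pos_left (c := √3 / 4) (by positivity)).mp (by linarith)
    gcongr
  norm_num at hlow hup
  linarith

theorem stmt_18 (n : ℕ) (lam j01 : ℝ) (hn : 4 ≤ n) (hj : 2.40 < j01)
    (hFK : lam ≥ (4 * π * j01 ^ 2 / Real.sqrt 3) * n)
    (hcount : (Real.sqrt 3 / (16 * π)) * lam - (3 / (2 * π)) * Real.sqrt lam + 2 - n ≤ 0) :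
    n ≤ 40 :=
  stmt_18_general n lam j01 hj hFK hcount
end

section
/- For all real u ∈ [2/15, 4/15] and all θ ∈ (0, π/6], the function BP(u) = -4·sin(π/5)·sin(15πu)·sin(πu + 3π/10 - θ) vanishes if and only if sin(15πu) = 0, i.e. u ∈ {2/15, 1/5, 4/15}; in particular sin(πu + 3π/10 - θ) > 0 on this interval. -/
/-!
The phase `π u + 3π/10 - θ` stays in `(0, π)`, and `sin (π / 5) ≠ 0`, so the product vanishes
exactly where `sin (15 π u)` does, i.e. where `15 u` is an integer in `[2, 4]`.
-/

open Real Set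

theorem sin_pi_mul_eq_zero_iff_exists_int {x : ℝ} : sin (π * x) = 0 ↔ ∃ n : ℤ, x = n := by
  rw [sin_eq_zero_iff]
  refine exists_congr fun n => ?_
  rw [mul_comm (n : ℝ), mul_right_inj' pi_ne_zero, eq_comm]

theorem sin_fifteen_pi_mul_eq_zero_iff {u : ℝ} (hu : u ∈ Icc (2 / 15 : ℝ) (4 / 15)) :
    sin (15 * π * u) = 0 ↔ u = 2 / 15 ∨ u = 1 / 5 ∨ u = 4 / 15 := by
  rw [show 15 * π * u = π * (15 * u) by ring, sin_pi_mul_eq_zero_iff_exists_int]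
  constructor
  · rintro ⟨n, hn⟩
    have h2 : (2 : ℤ) ≤ n := by exact_mod_cast (by linarith [hu.1] : (2 : ℝ) ≤ n)
    have h4 : n ≤ 4 := by exact_mod_cast (by linarith [hu.2] : (n : ℝ) ≤ 4)
    interval_cases n <;> push_cast at hn
    exacts [.inl (by linarith), .inr (.inl (by linarith)), .inr (.inr (by linarith))]
  · rintro (rfl | rfl | rfl)
    exacts [⟨2, by norm_num⟩, ⟨3, by norm_num⟩, ⟨4, by norm_num⟩]

theorem sin_pi_mul_add_three_pi_div_ten_sub_pos {u θ : ℝ} (hu : u ∈ Icc (2 / 15 : ℝ) (4 / 15))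
    (hθ : θ ∈ Ioc (0 : ℝ) (π / 6)) : 0 < sin (π * u + 3 * π / 10 - θ) := by
  have hlow := mul_le_mul_of_nonneg_left hu.1 pi_pos.le
  have hupp := mul_le_mul_of_nonneg_left hu.2 pi_pos.le
  exact sin_pos_of_pos_of_lt_pi (by linarith [hθ.2, pi_pos]) (by linarith [hθ.1, pi_pos])

theorem stmt_19 (u θ : ℝ) (hu : u ∈ Set.Icc (2 / 15 : ℝ) (4 / 15))
    (hθ : θ ∈ Set.Ioc (0 : ℝ) (π / 6)) :
    (-4 * sin (π / 5) * sin (15 * π * u) * sin (π * u + 3 * π / 10 - θ) = 0 ↔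
      sin (15 * π * u) = 0) ∧
    (sin (15 * π * u) = 0 ↔ u = 2 / 15 ∨ u = 1 / 5 ∨ u = 4 / 15) ∧
    sin (π * u + 3 * π / 10 - θ) > 0 := by
  have hphase := sin_pi_mul_add_three_pi_div_ten_sub_pos hu hθ
  have hsin : sin (π / 5) ≠ 0 := (sin_pos_of_pos_of_lt_pi (by positivity) (by linarith [pi_pos])).ne'
  refine ⟨?_, sin_fifteen_pi_mul_eq_zero_iff hu, hphase⟩
  simp [hsin, hphase.ne']
end
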